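/- Let m and n be positive integers with m ≡ 0 or 1 (mod 4) and n odd. Then there exists a Langford sequence of order mn and defect (n+1)/2. -/
import Mathlib


/-- A Langford sequence of order `m` and defect `d`, modeled as a function
`l : Fin (2*m) → ℕ`: for every `k ∈ [d, d+m-1]` there are exactly two subscripts
carrying the value `k`, and they differ by exactly `k`. -/
def IsLangford (m d : ℕ) (l : Fin (2 * m) → ℕ) : Prop :=
  ∀ k : ℕ, d ≤ k → k ≤ d + m - 1 →
    ∃ i j : Fin (2 * m), i < j ∧ (j : ℕ) - (i : ℕ) = k ∧
      (∀ t : Fin (2 * m), l t = k ↔ t = i ∨ t = j)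

/-- Explicit Skolem pairing: for `m ≡ 0, 1 (mod 4)` and `1 ≤ k ≤ m`, `skA m k` is the
(1-indexed) first position of the pair `{skA m k, skA m k + k}`; these pairs
partition `[1, 2m]`. -/
def skA (m k : ℕ) : ℕ :=
  if m % 4 = 0 then
    if k = 1 then 7*(m/4) - 1
    else if k % 2 = 1 ∧ k ≤ 4*(m/4) - 3 then (4*(m/4) - 1 - k)/2
    else if k = 4*(m/4) - 1 then 2*(m/4)
    else if k = 2*(m/4) then 2*(m/4) - 1
    else if k % 2 = 0 ∧ k ≤ 2*(m/4) - 2 then 6*(m/4) - 1 - k/2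
    else 6*(m/4) - k/2
  else
    if k = 1 then 7*(m/4) + 1
    else if k % 2 = 1 ∧ k ≤ 4*(m/4) - 1 then (4*(m/4) + 1 - k)/2
    else if k = 4*(m/4) + 1 then 2*(m/4)
    else if k = 2*(m/4) then 2*(m/4) + 1
    else if k % 2 = 0 ∧ k ≤ 2*(m/4) - 2 then 6*(m/4) + 1 - k/2
    else 6*(m/4) + 2 - k/2

lemma skA_range (m k : ℕ) (hmod : m % 4 = 0 ∨ m % 4 = 1) (h1 : 1 ≤ k) (h2 : k ≤ m) :
    1 ≤ skA m k ∧ skA m k + k ≤ 2 * m := by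
  unfold skA
  split_ifs <;> omega

set_option maxHeartbeats 2000000 in
lemma skA_disj0 (m k k' x : ℕ) (h0 : m % 4 = 0)
    (hk1 : 1 ≤ k) (hk2 : k ≤ m) (hk1' : 1 ≤ k') (hk2' : k' ≤ m)
    (h1 : x = skA m k ∨ x = skA m k + k) (h2 : x = skA m k' ∨ x = skA m k' + k') :
    k = k' := by
  unfold skA at h1 h2
  rw [if_pos h0] at h1 h2
  split_ifs at h1 h2 <;> omega

set_option maxHeartbeats 2000000 in
lemma skA_disj1 (m k k' x : ℕ) (h0 : m % 4 = 1)
    (hk1 : 1 ≤ k) (hk2 : k ≤ m) (hk1' : 1 ≤ k') (hk2' : k' ≤ m)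
    (h1 : x = skA m k ∨ x = skA m k + k) (h2 : x = skA m k' ∨ x = skA m k' + k') :
    k = k' := by
  have h0' : ¬ (m % 4 = 0) := by omega
  unfold skA at h1 h2
  rw [if_neg h0'] at h1 h2
  split_ifs at h1 h2 <;> omega

lemma skA_disj (m k k' x : ℕ) (hmod : m % 4 = 0 ∨ m % 4 = 1)
    (hk1 : 1 ≤ k) (hk2 : k ≤ m) (hk1' : 1 ≤ k') (hk2' : k' ≤ m)
    (h1 : x = skA m k ∨ x = skA m k + k) (h2 : x = skA m k' ∨ x = skA m k' + k') :
    k = k' := by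
  rcases hmod with h0 | h0
  · exact skA_disj0 m k k' x h0 hk1 hk2 hk1' hk2' h1 h2
  · exact skA_disj1 m k k' x h0 hk1 hk2 hk1' hk2' h1 h2

lemma range_conv (c m n : ℕ) (hn : n % 2 = 1)
    (h1 : (n + 1) / 2 ≤ c) (h2 : c ≤ (n + 1) / 2 + m * n - 1) :
    n / 2 + 1 ≤ c ∧ c ≤ n / 2 + m * n := by omega

/-- Offset of the first position of the pair for value `K` inside its block. -/
def LU (n K : ℕ) : ℕ :=
  if (K + n/2) % n = 0 then n/2 + 1
  else if (K + n/2) % n ≤ n/2 then (K + n/2) % n + n/2 + 1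
  else (K + n/2) % n - n/2

/-- Offset of the second position of the pair for value `K` inside its block. -/
def LV (n K : ℕ) : ℕ :=
  if (K + n/2) % n = 0 then 1
  else if (K + n/2) % n ≤ n/2 then 2*((K + n/2) % n) + 1
  else 2*((K + n/2) % n) - 2*(n/2)

/-- First (1-indexed) position of value `K` in the Langford sequence. -/
def LI (m n K : ℕ) : ℕ := (skA m ((K + n/2)/n) - 1) * n + LU n K

/-- Second (1-indexed) position of value `K` in the Langford sequence. -/
def LJ (m n K : ℕ) : ℕ := (skA m ((K + n/2)/n) + (K + n/2)/n - 1) * n + LV n K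

lemma LUV (n K : ℕ) (hn : n % 2 = 1) :
    1 ≤ LU n K ∧ LU n K ≤ n ∧ 1 ≤ LV n K ∧ LV n K ≤ n ∧
      LU n K + (K + n/2) % n = LV n K + n/2 := by
  have hn0 : 0 < n := by omega
  have hcn : (K + n/2) % n < n := Nat.mod_lt _ hn0
  unfold LU LV
  split_ifs <;> omega

lemma LU_inj (n K K' : ℕ) (hn : n % 2 = 1) (h : LU n K = LU n K') :
    (K + n/2) % n = (K' + n/2) % n := by
  have hn0 : 0 < n := by omega
  have hcn : (K + n/2) % n < n := Nat.mod_lt _ hn0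
  have hcn' : (K' + n/2) % n < n := Nat.mod_lt _ hn0
  unfold LU at h
  split_ifs at h <;> omega

lemma LV_inj (n K K' : ℕ) (hn : n % 2 = 1) (h : LV n K = LV n K') :
    (K + n/2) % n = (K' + n/2) % n := by
  have hn0 : 0 < n := by omega
  have hcn : (K + n/2) % n < n := Nat.mod_lt _ hn0
  have hcn' : (K' + n/2) % n < n := Nat.mod_lt _ hn0
  unfold LV at h
  split_ifs at h <;> omega

lemma Li_range (m n K : ℕ) (hn : n % 2 = 1)
    (hK1 : n/2 + 1 ≤ K) (hK2 : K ≤ n/2 + m*n) :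
    1 ≤ (K + n/2)/n ∧ (K + n/2)/n ≤ m := by
  have hn0 : 0 < n := by omega
  constructor
  · rw [Nat.one_le_div_iff hn0]; omega
  · by_contra h
    have h1 : n * (m+1) ≤ n * ((K + n/2)/n) := Nat.mul_le_mul_left n (by omega)
    have h2 : n * (m+1) = m * n + n := by ring
    have h3 : n * ((K + n/2)/n) + (K + n/2) % n = K + n/2 := Nat.div_add_mod _ n
    omega

lemma L_spec (m n K : ℕ) (hm : 0 < m) (hmod : m % 4 = 0 ∨ m % 4 = 1) (hn : n % 2 = 1)
    (hK1 : n/2 + 1 ≤ K) (hK2 : K ≤ n/2 + m*n) :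
    1 ≤ LI m n K ∧ LI m n K + K = LJ m n K ∧ LJ m n K ≤ 2*(m*n) := by
  have hn0 : 0 < n := by omega
  obtain ⟨hi1, him⟩ := Li_range m n K hn hK1 hK2
  obtain ⟨hA1, hA2⟩ := skA_range m ((K + n/2)/n) hmod hi1 him
  obtain ⟨hu1, hu2, hv1, hv2, huv⟩ := LUV n K hn
  have hdm : n * ((K + n/2)/n) + (K + n/2) % n = K + n/2 := Nat.div_add_mod _ n
  obtain ⟨B, hB⟩ : ∃ B, skA m ((K + n/2)/n) = B + 1 := ⟨skA m ((K + n/2)/n) - 1, by omega⟩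
  unfold LI LJ
  rw [hB]
  have e0 : B + 1 - 1 = B := by omega
  have e1 : B + 1 + (K + n/2)/n - 1 = B + (K + n/2)/n := by omega
  rw [e0, e1]
  have e2 : (B + (K + n/2)/n) * n = B * n + n * ((K + n/2)/n) := by ring
  have e3 : (B + (K + n/2)/n + 1) * n = B * n + n * ((K + n/2)/n) + n := by ring
  have e4 : (B + (K + n/2)/n + 1) * n ≤ (2*m) * n := Nat.mul_le_mul_right n (by omega)
  have e5 : (2*m) * n = 2*(m*n) := by ring
  omega

lemma block_unique (n a b u v : ℕ) (hu1 : 1 ≤ u) (hu2 : u ≤ n) (hv1 : 1 ≤ v) (hv2 : v ≤ n)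
    (h : a*n + u = b*n + v) : a = b ∧ u = v := by
  rcases Nat.lt_trichotomy a b with h' | h' | h'
  · exfalso
    have h1 : (a+1)*n ≤ b*n := Nat.mul_le_mul_right n (by omega)
    have h2 : (a+1)*n = a*n + n := by ring
    omega
  · subst h'; omega
  · exfalso
    have h1 : (b+1)*n ≤ a*n := Nat.mul_le_mul_right n (by omega)
    have h2 : (b+1)*n = b*n + n := by ring
    omega

lemma L_disj (m n K K' x : ℕ) (hm : 0 < m) (hmod : m % 4 = 0 ∨ m % 4 = 1) (hn : n % 2 = 1)
    (hK1 : n/2 + 1 ≤ K) (hK2 : K ≤ n/2 + m*n)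
    (hK1' : n/2 + 1 ≤ K') (hK2' : K' ≤ n/2 + m*n)
    (h1 : x = LI m n K ∨ x = LJ m n K) (h2 : x = LI m n K' ∨ x = LJ m n K') :
    K = K' := by
  have hn0 : 0 < n := by omega
  obtain ⟨hi1, him⟩ := Li_range m n K hn hK1 hK2
  obtain ⟨hi1', him'⟩ := Li_range m n K' hn hK1' hK2'
  obtain ⟨hA1, hA2⟩ := skA_range m ((K + n/2)/n) hmod hi1 him
  obtain ⟨hA1', hA2'⟩ := skA_range m ((K' + n/2)/n) hmod hi1' him'
  obtain ⟨hu1, hu2, hv1, hv2, huv⟩ := LUV n K hn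
  obtain ⟨hu1', hu2', hv1', hv2', huv'⟩ := LUV n K' hn
  have hdm : n * ((K + n/2)/n) + (K + n/2) % n = K + n/2 := Nat.div_add_mod _ n
  have hdm' : n * ((K' + n/2)/n) + (K' + n/2) % n = K' + n/2 := Nat.div_add_mod _ n
  -- the two positions of K sit in blocks E ∈ {A, A+i}, with offsets LU/LV
  unfold LI LJ at h1 h2
  -- case analysis on which of the two positions collide
  rcases h1 with h1 | h1 <;> rcases h2 with h2 | h2 <;> rw [h1] at h2
  · obtain ⟨hE, hW⟩ := block_unique n _ _ _ _ hu1 hu2 hu1' hu2' h2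
    have hi : (K + n/2)/n = (K' + n/2)/n := by
      refine skA_disj m _ _ (skA m ((K + n/2)/n)) hmod hi1 him hi1' him' (Or.inl rfl) (Or.inl ?_)
      omega
    have hc := LU_inj n K K' hn hW
    rw [hi] at hdm
    omega
  · obtain ⟨hE, hW⟩ := block_unique n _ _ _ _ hu1 hu2 hv1' hv2' h2
    have hi : (K + n/2)/n = (K' + n/2)/n := by
      refine skA_disj m _ _ (skA m ((K + n/2)/n)) hmod hi1 him hi1' him' (Or.inl rfl) (Or.inr ?_)
      omega
    exfalso
    rw [hi] at hE
    omega
  · obtain ⟨hE, hW⟩ := block_unique n _ _ _ _ hv1 hv2 hu1' hu2' h2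
    have hi : (K + n/2)/n = (K' + n/2)/n := by
      refine skA_disj m _ _ (skA m ((K + n/2)/n) + (K + n/2)/n) hmod hi1 him hi1' him'
        (Or.inr rfl) (Or.inl ?_)
      omega
    exfalso
    rw [hi] at hE
    omega
  · obtain ⟨hE, hW⟩ := block_unique n _ _ _ _ hv1 hv2 hv1' hv2' h2
    have hi : (K + n/2)/n = (K' + n/2)/n := by
      refine skA_disj m _ _ (skA m ((K + n/2)/n) + (K + n/2)/n) hmod hi1 him hi1' him'
        (Or.inr rfl) (Or.inr ?_)
      omega
    have hc := LV_inj n K K' hn hW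
    rw [hi] at hdm
    omega

/-- For `m ≡ 0, 1 (mod 4)` and `n` odd, there exists a Langford sequence of
order `m*n` and defect `(n+1)/2`. -/
theorem langford_exists_from_skolem (m n : ℕ) (hm : 0 < m)
    (hmod : m % 4 = 0 ∨ m % 4 = 1) (hn : 0 < n) (hodd : Odd n) :
    ∃ l : Fin (2 * (m * n)) → ℕ, IsLangford (m * n) ((n + 1) / 2) l := by
  classical
  have hn2 : n % 2 = 1 := Nat.odd_iff.mp hodd
  have hM1 : 1 ≤ m * n := Nat.mul_pos hm hn
  refine ⟨fun t => if h : ∃ K, (n + 1) / 2 ≤ K ∧ K ≤ (n + 1) / 2 + m * n - 1 ∧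
      ((t : ℕ) + 1 = LI m n K ∨ (t : ℕ) + 1 = LJ m n K) then h.choose else 0, ?_⟩
  intro K hK1 hK2
  have hd : (n + 1) / 2 = n / 2 + 1 := by omega
  have hKa : n/2 + 1 ≤ K := by omega
  have hKb : K ≤ n/2 + m*n := by omega
  obtain ⟨hI1, hIJ, hJ2⟩ := L_spec m n K hm hmod hn2 hKa hKb
  have hK0 : 1 ≤ K := by omega
  refine ⟨⟨LI m n K - 1, by omega⟩, ⟨LJ m n K - 1, by omega⟩, ?_, ?_, ?_⟩
  · simp only [Fin.mk_lt_mk]; omega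
  · show (LJ m n K - 1) - (LI m n K - 1) = K; omega
  · intro t
    constructor
    · intro hlt
      by_cases h : ∃ K', (n + 1) / 2 ≤ K' ∧ K' ≤ (n + 1) / 2 + m * n - 1 ∧
          ((t : ℕ) + 1 = LI m n K' ∨ (t : ℕ) + 1 = LJ m n K')
      · simp only [dif_pos h] at hlt
        obtain ⟨hc1, hc2, hc3⟩ := h.choose_spec
        rw [hlt] at hc3
        rcases hc3 with h' | h'
        · exact Or.inl (Fin.ext (show (t : ℕ) = LI m n K - 1 by omega))
        · exact Or.inr (Fin.ext (show (t : ℕ) = LJ m n K - 1 by omega))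
      · simp only [dif_neg h] at hlt
        omega
    · intro h'
      have hw : (t : ℕ) + 1 = LI m n K ∨ (t : ℕ) + 1 = LJ m n K := by
        rcases h' with rfl | rfl
        · left; show (LI m n K - 1 : ℕ) + 1 = LI m n K; omega
        · right; show (LJ m n K - 1 : ℕ) + 1 = LJ m n K; omega
      have hex : ∃ K', (n + 1) / 2 ≤ K' ∧ K' ≤ (n + 1) / 2 + m * n - 1 ∧
          ((t : ℕ) + 1 = LI m n K' ∨ (t : ℕ) + 1 = LJ m n K') := ⟨K, hK1, hK2, hw⟩
      simp only [dif_pos hex]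
      obtain ⟨hc1, hc2, hc3⟩ := hex.choose_spec
      obtain ⟨hr1, hr2⟩ := range_conv hex.choose m n hn2 hc1 hc2
      exact L_disj m n hex.choose K ((t : ℕ) + 1) hm hmod hn2 hr1 hr2 hKa hKb hc3 hw
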